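/- arXiv:2304.10738 — 8 statements merged into one kernel-verified Lean document; each statement's English description precedes it below -/
import Mathlib

section
/- Let L/H be an outer extension of division rings. Assume H is centrally finite and L/H is algebraic. Then the field extension Z(L)/Z(H) of centers is algebraic. -/
/-!
Since `[H(x) : H]` and `[H : Z(H)]` are finite, so is `[H(x) : Z(H)]`; the field `Z(H)(x)` is a
`Z(H)`-subspace of `H(x)`, hence finite-dimensional over `Z(H)` as well.
-/

/-- `FinSpanOver F E` : there are finitely many elements of `E` such that every element
of `E` is a left linear combination of them with coefficients in the subring `F`.
When `F` is a division subring and `E` is (the carrier of) a division subring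
containing `F`, this says exactly that `E` is finite-dimensional as a left
`F`-vector space, i.e. `[E : F] < ∞`. -/
def FinSpanOver {K : Type*} [Ring K] (F : Subring K) (E : Set K) : Prop :=
  ∃ B : Finset K, ↑B ⊆ E ∧
    ∀ y ∈ E, ∃ c : K → K, (∀ b ∈ B, c b ∈ F) ∧ y = ∑ b ∈ B, c b * b

/-- `x` is algebraic over the division subring `F` of `K`: the smallest division
subring `F(x)` of `K` containing `F` and `x` satisfies `[F(x) : F] < ∞`. -/
def IsAlgebraicOver {K : Type*} [DivisionRing K] (F : Subfield K) (x : K) : Prop :=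
  FinSpanOver F.toSubring (Subfield.closure ((F : Set K) ∪ {x}) : Set K)

/-- The center of a division subring `H` of `L`, as a subring of `L`:
`Z(H) = H ∩ C_L(H)`. -/
def centerOf {L : Type*} [DivisionRing L] (H : Subfield L) : Subring L :=
  H.toSubring ⊓ Subring.centralizer (H : Set L)

open Pointwise

section Ring

variable {K : Type*} [Ring K]

theorem exists_sum_eq_iff_mem_span {F : Subring K} {B : Finset K} {y : K} :
    (∃ c : K → K, (∀ b ∈ B, c b ∈ F) ∧ y = ∑ b ∈ B, c b * b) ↔
      y ∈ Submodule.span F (B : Set K) := by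
  constructor
  · rintro ⟨c, hc, rfl⟩
    refine Submodule.sum_mem _ fun b hb => ?_
    exact Submodule.smul_mem _ (⟨c b, hc b hb⟩ : F) (Submodule.subset_span hb)
  · intro hy
    obtain ⟨f, -, hf⟩ := Submodule.mem_span_finset.1 hy
    exact ⟨fun b => f b, fun b _ => (f b).2, hf.symm⟩

theorem finSpanOver_iff_subset_span {F : Subring K} {E : Set K} :
    FinSpanOver F E ↔ ∃ B : Finset K, ↑B ⊆ E ∧ E ⊆ Submodule.span F (B : Set K) := by
  simp only [FinSpanOver, exists_sum_eq_iff_mem_span]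
  rfl

theorem mul_mem_span_mul [DecidableEq K] {F : Subring K} {A B : Finset K} {a b : K}
    (ha : a ∈ Submodule.span F (A : Set K)) (hb : b ∈ B) :
    a * b ∈ Submodule.span F ((A * B : Finset K) : Set K) := by
  induction ha using Submodule.span_induction with
  | mem a ha => exact Submodule.subset_span (Finset.mul_mem_mul ha hb)
  | zero => simp
  | add x y _ _ hx hy => simpa [add_mul] using Submodule.add_mem _ hx hy
  | smul f x _ hx => simpa [smul_mul_assoc] using Submodule.smul_mem _ f hx

theorem FinSpanOver.trans {F G E : Subring K} (hGE : G ≤ E) (hG : FinSpanOver F G)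
    (hE : FinSpanOver G E) : FinSpanOver F E := by
  classical
  obtain ⟨A, hAG, hGA⟩ := finSpanOver_iff_subset_span.1 hG
  obtain ⟨B, hBE, hEB⟩ := hE
  refine finSpanOver_iff_subset_span.2 ⟨A * B, ?_, fun y hy => ?_⟩
  · intro y hy
    obtain ⟨a, ha, b, hb, rfl⟩ := Finset.mem_mul.1 hy
    exact E.mul_mem (hGE (hAG ha)) (hBE hb)
  · obtain ⟨c, hc, rfl⟩ := hEB y hy
    exact Submodule.sum_mem _ fun b hb => mul_mem_span_mul (hGA (hc b hb)) hb

def Subring.toLeftSubmodule {F E : Subring K} (hFE : F ≤ E) : Submodule F K where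
  carrier := E
  add_mem' := E.add_mem
  zero_mem' := E.zero_mem
  smul_mem' c _ hy := E.mul_mem (hFE c.2) hy

end Ring

section DivisionRing

variable {K : Type*} [DivisionRing K]

theorem FinSpanOver.of_submodule_subset {F : Subfield K} {E : Set K}
    (h : FinSpanOver F.toSubring E) (q : Submodule F K) (hqE : (q : Set K) ⊆ E) :
    FinSpanOver F.toSubring q := by
  obtain ⟨B, -, hEB⟩ := finSpanOver_iff_subset_span.1 h
  have : FiniteDimensional F q := Submodule.finiteDimensional_of_le (hqE.trans hEB)
  obtain ⟨S, hS⟩ := Module.Finite.iff_fg.1 this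
  exact finSpanOver_iff_subset_span.2 ⟨S, hS ▸ Submodule.subset_span, hS.symm ▸ le_rfl⟩

end DivisionRing

def centerSubfield {L : Type*} [DivisionRing L] (H : Subfield L) : Subfield L where
  toSubring := centerOf H
  inv_mem' a ha := by
    obtain ⟨haH, haC⟩ := Subring.mem_inf.1 ha
    refine Subring.mem_inf.2 ⟨H.inv_mem haH, Subring.mem_centralizer_iff.2 fun g hg => ?_⟩
    exact (show Commute g a from Subring.mem_centralizer_iff.1 haC g hg).inv_right₀

theorem center_algebraic_of_outer_algebraic_general
    (L : Type*) [DivisionRing L] (H : Subfield L)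
    (hHfin : FinSpanOver (centerOf H) (H : Set L))
    (halg : ∀ x : L, IsAlgebraicOver H x) :
    ∀ x ∈ Subring.center L,
      FinSpanOver (centerOf H)
        (Subfield.closure ((centerOf H : Set L) ∪ {x}) : Set L) := by
  intro x _
  have hHx : FinSpanOver (centerOf H) (Subfield.closure ((H : Set L) ∪ {x}) : Set L) :=
    hHfin.trans (E := (Subfield.closure ((H : Set L) ∪ {x})).toSubring)
      (fun _ h => Subfield.subset_closure (Or.inl h)) (halg x)
  have hZHx : (centerOf H : Set L) ∪ {x} ⊆ (H : Set L) ∪ {x} :=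
    Set.union_subset_union_left _ fun _ h => (Subring.mem_inf.1 h).1
  exact hHx.of_submodule_subset (F := centerSubfield H)
    (Subring.toLeftSubmodule fun _ h => Subfield.subset_closure (Or.inl h))
    (Subfield.closure_mono hZHx)

theorem center_algebraic_of_outer_algebraic
    (L : Type*) [DivisionRing L] (H : Subfield L)
    (houter : Subring.centralizer (H : Set L) = Subring.center L)
    (hHfin : FinSpanOver (centerOf H) (H : Set L))
    (halg : ∀ x : L, IsAlgebraicOver H x) :
    ∀ x ∈ Subring.center L,
      FinSpanOver (centerOf H)
        (Subfield.closure ((centerOf H : Set L) ∪ {x}) : Set L) :=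
  center_algebraic_of_outer_algebraic_general L H hHfin halg
end

section
/- Let H be a centrally finite division ring and let L be a finite extension of H with Z(H) ⊆ Z(L). Let ψ : H ⊗_{Z(H)} Z(L) → L be the unique Z(H)-linear map with ψ(x ⊗ y) = xy for all x ∈ H, y ∈ Z(L). Then the following are equivalent: (i) ψ is an isomorphism of Z(H)-algebras; (ii) L/H is outer; (iii) [Z(L) : Z(H)] = [L : H]. -/
/-!
An element of `Z(L)` commutes with `f(H)`, so a relation `∑ f(dᵢ) yᵢ = 0` over `H` among a
`Z(H)`-basis `yᵢ` of `Z(L)` can be normalised to have a coefficient `1` and then commuted with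
any `e ∈ H`, giving a shorter relation with coefficients `e dᵢ - dᵢ e`. By minimality all `dᵢ`
are central, hence zero. So the `yᵢ` stay left `H`-independent in `L`, the map `ψ` (always
multiplicative) is injective, and (i) ⇔ (iii) is a dimension count over `H`.

If `L/H` is outer, the `Z(L)`-subalgebra `S` generated by `H` has centralizer `Z(L)`. Then `L`
is a simple `S ⊗ Lᵒᵖ`-module whose endomorphisms are the scalars `Z(L)`, so by Jacobson density
`S ⊗ Lᵒᵖ → End_{Z(L)} L` is onto; comparing dimensions over `Z(L)` gives `S = L`, hence `ψ` is
onto. Conversely, if `ψ` is onto, whatever commutes with `H` commutes with `H · Z(L) = L`.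
-/

open TensorProduct

def centerRingHom {D L : Type*} [DivisionRing D] [DivisionRing L] (f : D →+* L)
    (hZ : ∀ x ∈ Subring.center D, f x ∈ Subring.center L) :
    Subring.center D →+* Subring.center L where
  toFun x := ⟨f x, hZ x x.2⟩
  map_one' := by ext; simp
  map_mul' x y := by ext; simp
  map_zero' := by ext; simp
  map_add' x y := by ext; simp

open Module

namespace Subalgebra

attribute [local instance] TensorProduct.Algebra.module

variable {K L : Type*} [Field K] [DivisionRing L] [Algebra K L] (S : Subalgebra K L)

theorem tmul_op_smul (s : S) (l x : L) : (s ⊗ₜ[K] MulOpposite.op l) • x = s * (x * l) := rfl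

instance isSimpleModule_tensorProduct_op : IsSimpleModule (S ⊗[K] Lᵐᵒᵖ) L :=
  isSimpleModule_iff_toSpanSingleton_surjective.mpr ⟨inferInstance, fun x hx z =>
    ⟨1 ⊗ₜ MulOpposite.op (x⁻¹ * z), by
      rw [LinearMap.toSpanSingleton_apply, tmul_op_smul, OneMemClass.coe_one, one_mul,
        mul_inv_cancel_left₀ hx]⟩⟩

theorem exists_eq_algebraMap_mul_of_centralizer_eq_bot
    (hS : centralizer K (S : Set L) = ⊥) (θ : End (S ⊗[K] Lᵐᵒᵖ) L) :
    ∃ c : K, ∀ x, θ x = algebraMap K L c * x := by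
  have hθ (x : L) : θ x = θ 1 * x := by
    simpa [tmul_op_smul] using θ.map_smul (1 ⊗ₜ MulOpposite.op x) 1
  have hmem : θ 1 ∈ centralizer K (S : Set L) := fun s hs => by
    have h := θ.map_smul (⟨s, hs⟩ ⊗ₜ MulOpposite.op 1) 1
    rw [tmul_op_smul, tmul_op_smul, mul_one, mul_one, mul_one] at h
    exact h.symm.trans (hθ s)
  rw [hS, Algebra.mem_bot] at hmem
  obtain ⟨c, hc⟩ := hmem
  exact ⟨c, fun x => by rw [hθ, hc]⟩

theorem moduleAux_surjective_of_centralizer_eq_bot [FiniteDimensional K L]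
    (hS : centralizer K (S : Set L) = ⊥) :
    Function.Surjective (TensorProduct.Algebra.moduleAux : S ⊗[K] Lᵐᵒᵖ →ₗ[K] End K L) := by
  classical
  intro φ
  let φ' : End (End (S ⊗[K] Lᵐᵒᵖ) L) L :=
    { toFun := φ
      map_add' := φ.map_add
      map_smul' θ x := by
        obtain ⟨c, hc⟩ := exists_eq_algebraMap_mul_of_centralizer_eq_bot S hS θ
        simp only [Module.End.smul_def, hc, ← Algebra.smul_def, map_smul, RingHom.id_apply] }
  let b := Module.finBasis K L
  obtain ⟨r, hr⟩ := jacobson_density φ' (Finset.univ.image b)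
  exact ⟨r, b.ext fun i => (hr (b i) (Finset.mem_image_of_mem b (Finset.mem_univ i))).symm⟩

theorem eq_top_of_centralizer_eq_bot [FiniteDimensional K L]
    (hS : centralizer K (S : Set L) = ⊥) : S = ⊤ := by
  have hle : finrank K L * finrank K L ≤ finrank K S * finrank K L :=
    calc finrank K L * finrank K L = finrank K (End K L) := (finrank_linearMap K K L L).symm
      _ ≤ finrank K (S ⊗[K] Lᵐᵒᵖ) :=
        LinearMap.finrank_le_finrank_of_surjective (moduleAux_surjective_of_centralizer_eq_bot S hS)
      _ = finrank K S * finrank K L := by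
        rw [finrank_tensorProduct, (MulOpposite.opLinearEquiv K).finrank_eq.symm]
  exact Algebra.toSubmodule_eq_top.mp <| Submodule.eq_top_of_finrank_eq <|
    (Submodule.finrank_le _).antisymm (Nat.le_of_mul_le_mul_right hle finrank_pos)

end Subalgebra

section Independence

variable {D L : Type*} [DivisionRing D] [Ring L] (f : D →+* L)

theorem sum_map_commutator_mul_eq_zero {ι : Type*} {y : ι → L}
    (hy : ∀ i, y i ∈ Subring.centralizer (Set.range f)) {s : Finset ι} {d : ι → D}
    (hd : ∑ i ∈ s, f (d i) * y i = 0) (e : D) :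
    ∑ i ∈ s, f (e * d i - d i * e) * y i = 0 := by
  have hterm (i : ι) :
      f (e * d i - d i * e) * y i = f e * (f (d i) * y i) - f (d i) * y i * f e := by
    rw [map_sub, map_mul, map_mul, sub_mul, mul_assoc, mul_assoc, mul_assoc,
      hy i (f e) ⟨e, rfl⟩]
  simp only [hterm, Finset.sum_sub_distrib, ← Finset.mul_sum, ← Finset.sum_mul, hd, mul_zero,
    zero_mul, sub_zero]

theorem linearIndependent_of_linearIndependent_center {ι : Type*} {y : ι → L}
    (hy : ∀ i, y i ∈ Subring.centralizer (Set.range f))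
    (hind : letI := (f.comp (Subring.center D).subtype).toModule
      LinearIndependent (Subring.center D) y) :
    letI := f.toModule
    LinearIndependent D y := by
  classical
  let := (f.comp (Subring.center D).subtype).toModule
  let := f.toModule
  rw [linearIndependent_iff'] at hind ⊢
  intro s
  induction s using Finset.strongInduction with
  | H s ih =>
    intro d hd
    by_contra! ⟨i₀, hi₀, hne⟩
    set d' : ι → D := fun j => (d i₀)⁻¹ * d j
    have hd'i₀ : d' i₀ = 1 := inv_mul_cancel₀ hne
    have hd' : ∑ j ∈ s, f (d' j) * y j = 0 := by
      simp only [d', map_mul, mul_assoc, ← Finset.mul_sum]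
      exact (congrArg _ hd).trans (mul_zero _)
    have hcentral (j : ι) (hj : j ∈ s) : d' j ∈ Subring.center D := by
      refine Subring.mem_center_iff.mpr fun e => ?_
      obtain rfl | hji := eq_or_ne j i₀
      · rw [hd'i₀, mul_one, one_mul]
      · have hcomm := sum_map_commutator_mul_eq_zero f hy hd' e
        rw [← Finset.sum_erase s (by rw [hd'i₀, mul_one, one_mul, sub_self, map_zero, zero_mul])]
          at hcomm
        exact sub_eq_zero.mp <|
          ih _ (Finset.erase_ssubset hi₀) _ hcomm j (Finset.mem_erase.mpr ⟨hji, hj⟩)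
    have h := hind s (fun j => if h : j ∈ s then ⟨d' j, hcentral j h⟩ else 0)
      (by rw [← hd']; exact Finset.sum_congr rfl fun j hj => by rw [dif_pos hj]; rfl) i₀ hi₀
    rw [dif_pos hi₀, Subtype.ext_iff, ZeroMemClass.coe_zero] at h
    exact one_ne_zero (hd'i₀.symm.trans h)

end Independence

section Ring

variable {D L : Type*} [Ring D] [Ring L] (f : D →+* L)
  [Algebra (Subring.center D) (Subring.center L)]
  {ψ : D ⊗[Subring.center D] Subring.center L →+ L}

theorem map_mul_of_map_tmul (hψ : ∀ x y, ψ (x ⊗ₜ y) = f x * y) (a b) :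
    ψ (a * b) = ψ a * ψ b := by
  induction a using TensorProduct.induction_on with
  | zero => simp
  | add a a' ha ha' => simp only [add_mul, map_add, ha, ha']
  | tmul x y =>
    induction b using TensorProduct.induction_on with
    | zero => simp
    | add b b' hb hb' => simp only [mul_add, map_add, hb, hb']
    | tmul x' y' =>
      rw [Algebra.TensorProduct.tmul_mul_tmul, hψ, hψ, hψ, map_mul, Subring.coe_mul,
        mul_assoc, mul_assoc, ← mul_assoc (y : L), ← Subring.mem_center_iff.mp y.2 (f x'),
        mul_assoc]

theorem map_smul_of_map_tmul (hψ : ∀ x y, ψ (x ⊗ₜ y) = f x * y) (d : D) (w) :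
    ψ (d • w) = f d * ψ w := by
  induction w using TensorProduct.induction_on with
  | zero => simp
  | add w w' hw hw' => simp only [smul_add, map_add, hw, hw', mul_add]
  | tmul x y => rw [smul_tmul', hψ, hψ, smul_eq_mul, map_mul, mul_assoc]

def linearMapOfMapTmul (hψ : ∀ x y, ψ (x ⊗ₜ y) = f x * y) :
    letI := f.toModule
    D ⊗[Subring.center D] Subring.center L →ₗ[D] L :=
  letI := f.toModule
  { ψ with map_smul' := map_smul_of_map_tmul f hψ }

theorem centralizer_eq_center_of_map_tmul_surjective (hψ : ∀ x y, ψ (x ⊗ₜ y) = f x * y)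
    (hsurj : Function.Surjective ψ) : Subring.centralizer (Set.range f) = Subring.center L := by
  refine le_antisymm (fun x hx => Subring.mem_center_iff.mpr fun z => ?_)
    (Subring.center_le_centralizer _)
  obtain ⟨w, rfl⟩ := hsurj z
  induction w using TensorProduct.induction_on with
  | zero => simp
  | add w w' hw hw' => rw [map_add, add_mul, mul_add, hw, hw']
  | tmul d y =>
    rw [hψ, mul_assoc, ← Subring.mem_center_iff.mp y.2 x, ← mul_assoc, hx (f d) ⟨d, rfl⟩,
      mul_assoc]

end Ring

section DivisionRing

variable {D L : Type*} [DivisionRing D] [Ring L] (f : D →+* L)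
  [Algebra (Subring.center D) (Subring.center L)]
  {ψ : D ⊗[Subring.center D] Subring.center L →+ L}

theorem injective_of_map_tmul
    (halg : ∀ c, (algebraMap (Subring.center D) (Subring.center L) c : L) = f c)
    (hψ : ∀ x y, ψ (x ⊗ₜ y) = f x * y) : Function.Injective ψ := by
  let := f.toModule
  let := (f.comp (Subring.center D).subtype).toModule
  let b := Module.Free.chooseBasis (Subring.center D) (Subring.center L)
  let B := Algebra.TensorProduct.basis D b
  let incl : Subring.center L →ₗ[Subring.center D] L :=
    { toFun := Subtype.val
      map_add' _ _ := rfl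
      map_smul' c y := by
        rw [RingHom.id_apply, Algebra.smul_def, Subring.coe_mul, halg]
        rfl }
  have hB : linearMapOfMapTmul f hψ ∘ B = fun i => (b i : L) := funext fun i => by
    simp [B, linearMapOfMapTmul, hψ]
  have hindep : LinearIndependent D (linearMapOfMapTmul f hψ ∘ B) := by
    rw [hB]
    exact linearIndependent_of_linearIndependent_center f
      (fun i => Subring.center_le_centralizer _ (b i).2)
      (b.linearIndependent.map' incl (LinearMap.ker_eq_bot.mpr Subtype.val_injective))
  exact LinearMap.injective_of_linearIndependent B.span_eq hindep

theorem surjective_of_map_tmul_iff_rank_eq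
    (halg : ∀ c, (algebraMap (Subring.center D) (Subring.center L) c : L) = f c)
    (hψ : ∀ x y, ψ (x ⊗ₜ y) = f x * y) (hfin : letI := f.toModule; Module.Finite D L) :
    letI := f.toModule
    Function.Surjective ψ ↔
      Module.rank (Subring.center D) (Subring.center L) = Module.rank D L := by
  let := f.toModule
  let ψD := linearMapOfMapTmul f hψ
  have hinj : Function.Injective ψD := injective_of_map_tmul f halg hψ
  have := Module.Finite.of_injective ψD hinj
  let b := Module.Free.chooseBasis (Subring.center D) (Subring.center L)
  have := Module.Finite.finite_basis (Algebra.TensorProduct.basis D b)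
  have := Module.Finite.of_basis b
  change Function.Surjective ψD ↔ _
  rw [← finrank_eq_rank, ← finrank_eq_rank, Nat.cast_inj, ← Module.finrank_baseChange (R := D),
    ← LinearMap.finrank_range_of_inj hinj, ← Submodule.eq_top_iff_finrank_eq,
    LinearMap.range_eq_top]

end DivisionRing

theorem surjective_of_map_tmul_of_centralizer_eq_center {D L : Type*} [Ring D] [DivisionRing L]
    (f : D →+* L) [Algebra (Subring.center D) (Subring.center L)]
    [FiniteDimensional (Subring.center L) L]
    {ψ : D ⊗[Subring.center D] Subring.center L →+ L} (hψ : ∀ x y, ψ (x ⊗ₜ y) = f x * y)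
    (houter : Subring.centralizer (Set.range f) = Subring.center L) : Function.Surjective ψ := by
  let S := Algebra.adjoin (Subring.center L) (Set.range f)
  have hS : Subalgebra.centralizer (Subring.center L) (S : Set L) = ⊥ :=
    eq_bot_iff.mpr fun x hx => by
      have hx' : x ∈ Subring.centralizer (Set.range f) :=
        fun z hz => hx z (Algebra.subset_adjoin hz)
      rw [houter] at hx'
      exact Algebra.mem_bot.mpr ⟨⟨x, hx'⟩, rfl⟩
  let φ : D ⊗[Subring.center D] Subring.center L →+* L :=
    { ψ with
      map_one' := by rw [Algebra.TensorProduct.one_def]; simp [hψ]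
      map_mul' := map_mul_of_map_tmul f hψ }
  have hle : S.toSubring ≤ φ.range := by
    rw [Algebra.adjoin_eq_ring_closure, Subring.closure_le]
    rintro _ (⟨y, rfl⟩ | ⟨d, rfl⟩)
    · exact ⟨1 ⊗ₜ y, show ψ _ = _ by rw [hψ, map_one, one_mul]; rfl⟩
    · exact ⟨d ⊗ₜ 1, show ψ _ = _ by rw [hψ, OneMemClass.coe_one, mul_one]⟩
  intro x
  have hx : x ∈ S := by rw [Subalgebra.eq_top_of_centralizer_eq_bot S hS]; exact Algebra.mem_top
  exact hle hx

theorem finiteDimensional_center_of_finite {D L : Type*} [DivisionRing D] [DivisionRing L]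
    [FiniteDimensional (Subring.center D) D] (f : D →+* L)
    (hZ : ∀ x ∈ Subring.center D, f x ∈ Subring.center L)
    (hfin : letI := f.toModule; Module.Finite D L) :
    FiniteDimensional (Subring.center L) L := by
  let := f.toModule
  let := (f.comp (Subring.center D).subtype).toModule
  let := (centerRingHom f hZ).toAlgebra
  have : IsScalarTower (Subring.center D) D L :=
    ⟨fun c d x => show f (c * d) * x = f c * (f d * x) by rw [map_mul, mul_assoc]⟩
  have : IsScalarTower (Subring.center D) (Subring.center L) L := ⟨fun _ _ _ => mul_assoc _ _ _⟩
  have := Module.Finite.trans (R := Subring.center D) D L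
  exact Module.Finite.of_restrictScalars_finite (Subring.center D) (Subring.center L) L

theorem finite_outer_extension_tfae
    (D L : Type*) [DivisionRing D] [DivisionRing L]
    (f : D →+* L)
    (hDfin : FiniteDimensional (Subring.center D) D)
    (hZ : ∀ x ∈ Subring.center D, f x ∈ Subring.center L) :
    letI : Module D L := f.toModule
    letI : Algebra (Subring.center D) (Subring.center L) := (centerRingHom f hZ).toAlgebra
    letI : Module (Subring.center D) L :=
      (f.comp (Subring.center D).subtype).toModule
    Module.Finite D L →
    ∀ ψ : D ⊗[Subring.center D] (Subring.center L) →ₗ[Subring.center D] L,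
      (∀ (x : D) (y : Subring.center L), ψ (x ⊗ₜ y) = f x * (y : L)) →
      (((Function.Bijective ψ ∧ ∀ a b, ψ (a * b) = ψ a * ψ b) ↔
          Subring.centralizer (Set.range f) = Subring.center L) ∧
       ((Function.Bijective ψ ∧ ∀ a b, ψ (a * b) = ψ a * ψ b) ↔
          Module.rank (Subring.center D) (Subring.center L) = Module.rank D L)) := by
  intro hfin ψ hψ
  let := (centerRingHom f hZ).toAlgebra
  have halg : ∀ c, (algebraMap (Subring.center D) (Subring.center L) c : L) = f c :=
    fun _ => rfl
  have hψ' : ∀ x y, ψ.toAddMonoidHom (x ⊗ₜ y) = f x * y := hψ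
  have hinj := injective_of_map_tmul f halg hψ'
  have hmul := map_mul_of_map_tmul f hψ'
  have := finiteDimensional_center_of_finite f hZ hfin
  have hrank := surjective_of_map_tmul_iff_rank_eq f halg hψ' hfin
  exact ⟨⟨fun h => centralizer_eq_center_of_map_tmul_surjective f hψ' h.1.2,
      fun h => ⟨⟨hinj, surjective_of_map_tmul_of_centralizer_eq_center f hψ' h⟩, hmul⟩⟩,
    ⟨fun h => hrank.mp h.1.2, fun h => ⟨⟨hinj, hrank.mpr h⟩, hmul⟩⟩⟩
end

section
/- Let L/H be an outer extension of division rings. Then the extension L((T))/H is outer, where L((T)) is the division ring of formal Laurent series over L in a central variable T. -/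
/-!
A series `x` commuting with every constant `C a`, `a ∈ H`, has all its coefficients in the
centralizer of `H`, i.e. (by outerness) in the center of `L`. A series whose coefficients are all
central commutes with every series, since the coefficient of the Cauchy product
`∑ x_i y_j` is symmetric in the two factors once the `x_i` commute with the `y_j`.
-/

namespace HahnSeries

variable {Γ R : Type*} [AddCommMonoid Γ] [PartialOrder Γ] [IsOrderedCancelAddMonoid Γ]

theorem commute_of_coeff_commute [NonUnitalNonAssocSemiring R] {x y : R⟦Γ⟧}
    (h : ∀ i j, Commute (x.coeff i) (y.coeff j)) : Commute x y := by
  ext a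
  rw [coeff_mul, coeff_mul]
  refine Finset.sum_equiv (Equiv.prodComm _ _)
    (fun _ ↦ Finset.swap_mem_antidiagonal.symm) (fun p _ ↦ ?_)
  exact (h p.1 p.2).eq

theorem commute_C_iff [NonAssocSemiring R] {r : R} {x : R⟦Γ⟧} :
    Commute (C r) x ↔ ∀ n, Commute r (x.coeff n) := by
  simp only [Commute, SemiconjBy, HahnSeries.ext_iff, funext_iff, C_apply,
    coeff_single_zero_mul, coeff_mul_single_zero]

theorem centralizer_image_C_eq_center [Semiring R] {S : Set R}
    (hS : S.centralizer = Set.center R) :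
    (C '' S : Set R⟦Γ⟧).centralizer = Set.center R⟦Γ⟧ := by
  refine subset_antisymm (fun x hx ↦ ?_) (Set.center_subset_centralizer _)
  have hcoeff : ∀ n, x.coeff n ∈ Set.center R := fun n ↦
    hS ▸ fun r hr ↦ (commute_C_iff.mp (hx (C r) ⟨r, hr, rfl⟩) n).eq
  exact Semigroup.mem_center_iff.mpr fun y ↦
    commute_of_coeff_commute fun i j ↦ Semigroup.mem_center_iff.mp (hcoeff j) (y.coeff i)

end HahnSeries

theorem laurent_series_outer
    (L : Type*) [DivisionRing L] (H : Subfield L)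
    (houter : Subring.centralizer (H : Set L) = Subring.center L) :
    Subring.centralizer ((HahnSeries.C : L →+* LaurentSeries L) '' (H : Set L)) =
      Subring.center (LaurentSeries L) := by
  rw [← SetLike.coe_set_eq, Subring.coe_centralizer, Subring.coe_center]
  apply HahnSeries.centralizer_image_C_eq_center
  rwa [← SetLike.coe_set_eq, Subring.coe_centralizer, Subring.coe_center] at houter
end

section
/- Let H be a division ring and n ≥ 1. Then the extension H(T₁, …, Tₙ)/H is outer, i.e., the centralizer of H in H(T₁, …, Tₙ) equals the center of H(T₁, …, Tₙ). -/
/-!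
An element `z` of the centralizer of `H` commutes with the images of the constants and of the
monomials `T^e`; the latter are central in `K`, since they are central in `H[T₁, …, Tₙ]` and `K`
consists of fractions of polynomials. Hence `z` commutes with every polynomial, and therefore
with every fraction `p q⁻¹`, i.e. with all of `K`.
-/

open AddMonoidAlgebra

section Fractions

variable {R K : Type*} [Ring R] [DivisionRing K] (f : R →+* K)

theorem mem_center_of_forall_commute_map (hfrac : ∀ z : K, ∃ p q : R, z = f p * (f q)⁻¹)
    {z : K} (hz : ∀ p, Commute z (f p)) : z ∈ Subring.center K := by
  refine Subring.mem_center_iff.mpr fun k => ?_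
  obtain ⟨p, q, rfl⟩ := hfrac k
  exact ((hz p).mul_right (hz q).inv_right₀).symm.eq

theorem map_mem_center_of_forall_commute (hfrac : ∀ z : K, ∃ p q : R, z = f p * (f q)⁻¹)
    {c : R} (hc : ∀ r, Commute c r) : f c ∈ Subring.center K :=
  mem_center_of_forall_commute_map f hfrac fun p => (hc p).map f

end Fractions

theorem AddMonoidAlgebra.commute_map_of_commute_single {k G S : Type*} [Semiring k] [AddMonoid G]
    [Semiring S] (f : AddMonoidAlgebra k G →+* S) {z : S}
    (hconst : ∀ b, Commute z (f (single 0 b))) (hmonomial : ∀ g, Commute z (f (single g 1)))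
    (p : AddMonoidAlgebra k G) : Commute z (f p) := by
  induction p using AddMonoidAlgebra.induction_linear with
  | zero => simp
  | add p q hp hq => simpa only [map_add] using hp.add_right hq
  | single g b =>
    have hsplit : single g b = single (0 : G) b * single g 1 := by
      rw [single_mul_single, zero_add, mul_one]
    rw [hsplit, map_mul]
    exact (hconst b).mul_right (hmonomial g)

theorem rational_function_skew_field_outer_general
    (H K : Type*) [DivisionRing H] [DivisionRing K] (n : ℕ)
    (ι : AddMonoidAlgebra H (Fin n →₀ ℕ) →+* K)
    (hquot : ∀ z : K, ∃ p q : AddMonoidAlgebra H (Fin n →₀ ℕ), q ≠ 0 ∧ z = ι p * (ι q)⁻¹) :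
    Subring.centralizer
        (Set.range (ι.comp AddMonoidAlgebra.singleZeroRingHom)) =
      Subring.center K := by
  have hfrac : ∀ z : K, ∃ p q, z = ι p * (ι q)⁻¹ := fun z =>
    (hquot z).imp fun _ ⟨q, _, hz⟩ => ⟨q, hz⟩
  refine le_antisymm (fun z hz => ?_) (Subring.center_le_centralizer _)
  refine mem_center_of_forall_commute_map ι hfrac
    (commute_map_of_commute_single ι (fun b => ?_) fun e => ?_)
  · exact (Subring.mem_centralizer_iff.mp hz _ ⟨b, rfl⟩).symm
  · have hcentral := map_mem_center_of_forall_commute ι hfrac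
      (single_commute (fun _ => AddCommute.all _ _) (fun _ => Commute.one_left _) :
        ∀ p, Commute (single e (1 : H)) p)
    exact (Subring.mem_center_iff.mp hcentral z)

theorem rational_function_skew_field_outer
    (H K : Type*) [DivisionRing H] [DivisionRing K] (n : ℕ) (hn : 1 ≤ n)
    (ι : AddMonoidAlgebra H (Fin n →₀ ℕ) →+* K) (hinj : Function.Injective ι)
    (hquot : ∀ z : K, ∃ p q : AddMonoidAlgebra H (Fin n →₀ ℕ), q ≠ 0 ∧ z = ι p * (ι q)⁻¹) :
    Subring.centralizer
        (Set.range (ι.comp AddMonoidAlgebra.singleZeroRingHom)) =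
      Subring.center K :=
  rational_function_skew_field_outer_general H K n ι hquot
end

section
/- Let H be a centrally finite division ring, n ≥ 1, and f ∈ Z(H)(T₁, …, Tₙ). Then the unique Z(H)-linear map ψ : H ⊗_{Z(H)} Z(H)(f) → H(f) satisfying ψ(x ⊗ y) = xy for all x ∈ H, y ∈ Z(H)(f) is an isomorphism of Z(H)-algebras. In particular, Z(H(f)) = Z(H)(f). -/
/-!
Write `F = Z(H)` and `C = Z(H)(f)`. Since `H` is a central division algebra over `F`, the ring
`C ⊗_F H` is simple: in a nonzero ideal, an element `∑ cⱼ ⊗ hⱼ` (over an `F`-basis `cⱼ` of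
`C`) with the fewest terms can be normalised to have some `hⱼ = 1`; its commutators with
`1 ⊗ H` are shorter, hence zero, so it lies in the centralizer of `1 ⊗ H`, which is `C ⊗ 1`,
and is a unit. So the multiplication map into `K` is injective. Its image is a domain which is
finite-dimensional over the central subfield `C`, hence a division ring; it is generated by `H`
and `C ∋ f`, so it is `H(f)`. Its center is the image of the centralizer of `1 ⊗ H`, that is `C`.
-/


open TensorProduct

noncomputable section

variable {H K : Type*} [DivisionRing H] [DivisionRing K]

/-- The embedding of the coefficient division ring `H` into the quotient division ring
`K` of the polynomial ring `H[T₁, …, Tₙ] = AddMonoidAlgebra H (Fin n →₀ ℕ)`. -/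
def constEmb (n : ℕ) (ι : AddMonoidAlgebra H (Fin n →₀ ℕ) →+* K) : H →+* K :=
  ι.comp AddMonoidAlgebra.singleZeroRingHom

/-- `Z(H)(f)`: the smallest subfield of the (commutative) center of `K` containing
(the image of) `Z(H)` and `f`. -/
def centerAdjoin (n : ℕ) (ι : AddMonoidAlgebra H (Fin n →₀ ℕ) →+* K)
    (f : K) (hf : f ∈ Subring.center K) : Subfield (Subring.center K) :=
  Subfield.closure
    ({x : Subring.center K | (x : K) ∈ constEmb n ι '' (Subring.center H : Set H)} ∪
      {⟨f, hf⟩})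

/-- The natural ring homomorphism `Z(H) → Z(H)(f)`. -/
def centerToCenterAdjoin (n : ℕ) (ι : AddMonoidAlgebra H (Fin n →₀ ℕ) →+* K)
    (f : K) (hf : f ∈ Subring.center K)
    (hcent : ∀ a ∈ Subring.center H, constEmb n ι a ∈ Subring.center K) :
    Subring.center H →+* centerAdjoin n ι f hf where
  toFun x := ⟨⟨constEmb n ι x, hcent x x.2⟩,
    Subfield.subset_closure (Or.inl ⟨(x : H), x.2, rfl⟩)⟩
  map_one' := by refine Subtype.ext (Subtype.ext ?_); simp
  map_mul' x y := by refine Subtype.ext (Subtype.ext ?_); simp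
  map_zero' := by refine Subtype.ext (Subtype.ext ?_); simp
  map_add' x y := by refine Subtype.ext (Subtype.ext ?_); simp

open Algebra.TensorProduct (includeLeft includeRight)

instance Subring.isCentral_center (R : Type*) [Ring R] : Algebra.IsCentral (Subring.center R) R :=
  ⟨fun x hx => ⟨⟨x, hx⟩, rfl⟩⟩

theorem Subalgebra.centralizer_range_includeRight_of_isCentral (R A B : Type*) [CommSemiring R]
    [Semiring A] [Algebra R A] [Module.Free R A] [Semiring B] [Algebra R B]
    [Algebra.IsCentral R B] :
    Subalgebra.centralizer R ((includeRight : B →ₐ[R] A ⊗[R] B).range : Set (A ⊗[R] B)) =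
      (includeLeft (S := R)).range := by
  rw [Subalgebra.centralizer_range_includeRight_eq_center_tensorProduct,
    Algebra.TensorProduct.map_range, AlgHom.comp_id, AlgHom.range_comp (Subalgebra.val _),
    Subalgebra.range_val, Algebra.IsCentral.center_eq_bot, Algebra.map_bot, sup_bot_eq]

theorem Finsupp.support_mapRange_mul_sub_mapRange_mul_ssubset {ι R : Type*} [Ring R]
    [Nontrivial R] {l : ι →₀ R} {j : ι} (hj : l j = 1) (a : R) :
    (l.mapRange (a * ·) (mul_zero a) - l.mapRange (· * a) (zero_mul a)).support ⊂
      l.support := by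
  refine (Finset.ssubset_iff_of_subset fun k hk => ?_).2 ⟨j, by simp [hj], by simp [hj]⟩
  exact Finsupp.mem_support_iff.2 fun h0 => Finsupp.mem_support_iff.1 hk (by simp [h0])

namespace Algebra.TensorProduct

section

variable {R A B ι : Type*} [CommSemiring R] [Semiring A] [Algebra R A] [Semiring B] [Algebra R B]

theorem includeRight_mul_sum_tmul (v : ι → A) (l : ι →₀ B) (b : B) :
    includeRight b * l.sum (fun i x => v i ⊗ₜ[R] x) =
      (l.mapRange (b * ·) (mul_zero b)).sum fun i x => v i ⊗ₜ[R] x := by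
  rw [Finsupp.sum_mapRange_index fun _ => tmul_zero _ _, Finsupp.mul_sum]
  simp [tmul_mul_tmul]

theorem sum_tmul_mul_includeRight (v : ι → A) (l : ι →₀ B) (b : B) :
    (l.sum fun i x => v i ⊗ₜ[R] x) * includeRight b =
      (l.mapRange (· * b) (zero_mul b)).sum fun i x => v i ⊗ₜ[R] x := by
  rw [Finsupp.sum_mapRange_index fun _ => tmul_zero _ _, Finsupp.sum_mul]
  simp [tmul_mul_tmul]

end

instance isSimpleRing_of_isCentral {F C H : Type*} [Field F] [Field C] [Algebra F C]
    [DivisionRing H] [Algebra F H] [Algebra.IsCentral F H] :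
    IsSimpleRing (C ⊗[F] H) := by
  refine (IsSimpleRing.iff_injective_ringHom _).2 fun {S} _ _ g => ?_
  let b := Module.Free.chooseBasis F C
  let rep := Finsupp.lsum F fun j => TensorProduct.mk F C H (b j)
  have rep_apply (l) : rep l = l.sum fun j h => b j ⊗ₜ h := rfl
  suffices ∀ l, g (rep l) = 0 → l = 0 by
    refine (injective_iff_map_eq_zero g).2 fun w hw => ?_
    obtain ⟨l, rfl⟩ := TensorProduct.eq_repr_basis_left b w
    rw [← rep_apply, this l hw, map_zero]
  intro l hl
  induction hn : l.support.card using Nat.strong_induction_on generalizing l with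
  | _ n ih =>
  by_contra hl0
  obtain ⟨j, hj⟩ := Finsupp.support_nonempty_iff.2 hl0
  have hlj : l j ≠ 0 := Finsupp.mem_support_iff.1 hj
  set l₁ := l.mapRange ((l j)⁻¹ * ·) (mul_zero _)
  have hl₁j : l₁ j = 1 := inv_mul_cancel₀ hlj
  have hl₁supp : l₁.support = l.support :=
    Finsupp.support_mapRange_of_injective _ _ (mul_right_injective₀ (inv_ne_zero hlj))
  have hgl₁ : g (rep l₁) = 0 := by
    rw [rep_apply, ← includeRight_mul_sum_tmul, ← rep_apply, map_mul, hl, mul_zero]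
  -- every commutator with `1 ⊗ a` has a shorter expansion, so it vanishes
  have hcomm : rep l₁ ∈ Subalgebra.centralizer F
      ((includeRight : H →ₐ[F] C ⊗[F] H).range : Set (C ⊗[F] H)) := by
    rw [Subalgebra.mem_centralizer_iff]
    intro x hx
    obtain ⟨a, rfl⟩ := (AlgHom.mem_range _).1 hx
    set d := l₁.mapRange (a * ·) (mul_zero a) - l₁.mapRange (· * a) (zero_mul a)
    have hd : rep d + rep l₁ * includeRight a = includeRight a * rep l₁ := by
      rw [map_sub, rep_apply, rep_apply, rep_apply, includeRight_mul_sum_tmul,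
        sum_tmul_mul_includeRight, sub_add_cancel]
    have hgd : g (rep d) = 0 := by simpa [hgl₁] using congrArg g hd
    have hdcard : d.support.card < n := hn ▸ hl₁supp ▸
      Finset.card_lt_card (Finsupp.support_mapRange_mul_sub_mapRange_mul_ssubset hl₁j a)
    rw [← hd, ih _ hdcard d hgd rfl, map_zero, zero_add]
  rw [Subalgebra.centralizer_range_includeRight_of_isCentral] at hcomm
  obtain ⟨c, hc⟩ := (AlgHom.mem_range _).1 hcomm
  have hgc : g (includeLeft c) = 0 := hc ▸ hgl₁
  have hc0 : c = 0 := (g.comp (includeLeft (S := F)).toRingHom).injective (by simpa using hgc)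
  have : l₁ = 0 := TensorProduct.sum_tmul_basis_left_injective b (by
    rw [map_zero]; exact hc.symm.trans (by rw [hc0, map_zero]))
  simp [this] at hl₁j

end Algebra.TensorProduct

theorem Subalgebra.inv_mem_of_finiteDimensional {K D : Type*} [Field K] [DivisionRing D]
    [Algebra K D] (A : Subalgebra K D) [FiniteDimensional K A] {x : D} (hx : x ∈ A) :
    x⁻¹ ∈ A := by
  rcases eq_or_ne x 0 with rfl | hx0
  · simp
  have hinj : Function.Injective (LinearMap.mulLeft K (⟨x, hx⟩ : A)) := fun y z hyz =>
    Subtype.ext (mul_left_cancel₀ hx0 (congrArg Subtype.val hyz))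
  obtain ⟨y, hy⟩ := LinearMap.injective_iff_surjective.1 hinj 1
  rw [inv_eq_of_mul_eq_one_right (congrArg Subtype.val hy)]
  exact y.2

namespace AlgHom

variable {F C H K : Type*} [Field F] [Field C] [Algebra F C] [DivisionRing H] [Algebra F H]
  [DivisionRing K] [Algebra F K] [Algebra C K] [IsScalarTower F C K]

def baseChangeLift (φ : H →ₐ[F] K) : C ⊗[F] H →ₐ[C] K :=
  Algebra.TensorProduct.lift (Algebra.ofId C K) φ fun c h => Algebra.commutes c (φ h)

@[simp]
theorem baseChangeLift_tmul (φ : H →ₐ[F] K) (c : C) (h : H) :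
    φ.baseChangeLift (c ⊗ₜ h) = algebraMap C K c * φ h :=
  Algebra.TensorProduct.lift_tmul _ _ _ c h

theorem baseChangeLift_injective [Algebra.IsCentral F H] (φ : H →ₐ[F] K) :
    Function.Injective (φ.baseChangeLift (C := C)) :=
  (φ.baseChangeLift (C := C)).toRingHom.injective

theorem range_baseChangeLift [FiniteDimensional F H] (φ : H →ₐ[F] K) :
    Set.range (φ.baseChangeLift (C := C)) =
      Subfield.closure (Set.range (algebraMap C K) ∪ Set.range φ) := by
  set A := (φ.baseChangeLift (C := C)).range
  have : FiniteDimensional C A := Module.Finite.range (φ.baseChangeLift (C := C)).toLinearMap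
  let S : Subfield K :=
    { A.toSubring with inv_mem' := fun x hx => A.inv_mem_of_finiteDimensional hx }
  apply subset_antisymm
  · rintro _ ⟨w, rfl⟩
    induction w using TensorProduct.induction_on with
    | zero => simp
    | tmul c h =>
      rw [baseChangeLift_tmul]
      exact mul_mem (Subfield.subset_closure (Or.inl ⟨c, rfl⟩))
        (Subfield.subset_closure (Or.inr ⟨h, rfl⟩))
    | add x y hx hy => rw [map_add]; exact add_mem hx hy
  · rw [← coe_range]
    refine (Subfield.closure_le (t := S)).2 ?_
    rintro _ (⟨c, rfl⟩ | ⟨h, rfl⟩)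
    · exact A.algebraMap_mem c
    · exact ⟨1 ⊗ₜ h, by simp⟩

theorem setOf_commute_range_baseChangeLift [Algebra.IsCentral F H] (φ : H →ₐ[F] K) :
    {x | x ∈ Set.range (φ.baseChangeLift (C := C)) ∧
        ∀ y ∈ Set.range (φ.baseChangeLift (C := C)), x * y = y * x} =
      Set.range (algebraMap C K) := by
  apply subset_antisymm
  · rintro _ ⟨⟨w, rfl⟩, hw⟩
    have : w ∈ Subalgebra.centralizer F
        ((includeRight : H →ₐ[F] C ⊗[F] H).range : Set (C ⊗[F] H)) := by
      rw [Subalgebra.mem_centralizer_iff]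
      intro x hx
      obtain ⟨h, rfl⟩ := (AlgHom.mem_range _).1 hx
      apply φ.baseChangeLift_injective (C := C)
      simp only [map_mul]
      exact (hw _ ⟨_, rfl⟩).symm
    rw [Subalgebra.centralizer_range_includeRight_of_isCentral] at this
    obtain ⟨c, rfl⟩ := (AlgHom.mem_range _).1 this
    exact ⟨c, by simp⟩
  · rintro _ ⟨c, rfl⟩
    exact ⟨⟨c ⊗ₜ 1, by simp⟩, fun y _ => Algebra.commutes c y⟩

end AlgHom

theorem closure_range_centerAdjoin_union (n : ℕ)
    (ι : AddMonoidAlgebra H (Fin n →₀ ℕ) →+* K) (f : K) (hf : f ∈ Subring.center K) :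
    Subfield.closure (Set.range (fun c : centerAdjoin n ι f hf => ((c : Subring.center K) : K)) ∪
        Set.range (constEmb n ι)) =
      Subfield.closure (Set.range (constEmb n ι) ∪ {f}) := by
  set L := Subfield.closure (Set.range (constEmb n ι) ∪ {f})
  have hC : centerAdjoin n ι f hf ≤ L.comap (Subring.center K).subtype := by
    refine Subfield.closure_le.2 (Set.union_subset ?_ ?_)
    · rintro x ⟨a, -, hax⟩
      exact Subfield.subset_closure (Or.inl ⟨a, hax⟩)
    · rintro _ rfl
      exact Subfield.subset_closure (Or.inr rfl)
  apply le_antisymm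
  · refine Subfield.closure_le.2 (Set.union_subset ?_ ?_)
    · rintro _ ⟨c, rfl⟩
      exact hC c.2
    · exact Set.subset_union_left.trans Subfield.subset_closure
  · refine Subfield.closure_le.2 (Set.union_subset ?_ ?_)
    · exact Set.subset_union_right.trans Subfield.subset_closure
    · exact Set.singleton_subset_iff.2
        (Subfield.subset_closure (Or.inl ⟨⟨⟨f, hf⟩, Subfield.subset_closure (Or.inr rfl)⟩, rfl⟩))

set_option synthInstance.maxHeartbeats 1000000 in
theorem tensor_center_adjoin_iso_general
    (n : ℕ)
    (hHfin : FiniteDimensional (Subring.center H) H)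
    (ι : AddMonoidAlgebra H (Fin n →₀ ℕ) →+* K)
    (f : K) (hf : f ∈ Subring.center K) :
    ∀ hcent : ∀ a ∈ Subring.center H, constEmb n ι a ∈ Subring.center K,
    letI : Algebra (Subring.center H) (centerAdjoin n ι f hf) :=
      (centerToCenterAdjoin n ι f hf hcent).toAlgebra
    letI : Module (Subring.center H) K :=
      ((constEmb n ι).comp (Subring.center H).subtype).toModule
    (∀ ψ : H ⊗[Subring.center H] (centerAdjoin n ι f hf) →ₗ[Subring.center H] K,
      (∀ (x : H) (y : centerAdjoin n ι f hf), ψ (x ⊗ₜ y) = constEmb n ι x * ((y : Subring.center K) : K)) →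
      Function.Injective ψ ∧
      Set.range ψ = (Subfield.closure (Set.range (constEmb n ι) ∪ {f}) : Set K) ∧
      ∀ a b, ψ (a * b) = ψ a * ψ b) ∧
    {x : K | x ∈ Subfield.closure (Set.range (constEmb n ι) ∪ {f}) ∧
        ∀ y ∈ Subfield.closure (Set.range (constEmb n ι) ∪ {f}), x * y = y * x} =
      (fun z : Subring.center K => (z : K)) '' (centerAdjoin n ι f hf : Set (Subring.center K)) := by
  intro hcent
  set C := centerAdjoin n ι f hf
  let _ : Algebra (Subring.center H) C := (centerToCenterAdjoin n ι f hf hcent).toAlgebra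
  let _ : Algebra (Subring.center H) K :=
    ((constEmb n ι).comp (Subring.center H).subtype).toAlgebra' fun z x =>
      Subring.mem_center_iff.1 (hcent z z.2) x |>.symm
  have _ : IsScalarTower (Subring.center H) C K := .of_algebraMap_eq fun _ => rfl
  let φ : H →ₐ[Subring.center H] K := { constEmb n ι with commutes' := fun _ => rfl }
  set Ψ := φ.baseChangeLift (C := C)
  have hrange : Set.range Ψ = (Subfield.closure (Set.range (constEmb n ι) ∪ {f}) : Set K) :=
    (φ.range_baseChangeLift).trans (congrArg _ (closure_range_centerAdjoin_union n ι f hf))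
  refine ⟨fun ψ hψ => ?_, ?_⟩
  · have hψΨ : ⇑ψ = Ψ ∘ Algebra.TensorProduct.comm _ _ _ := by
      ext t
      induction t using TensorProduct.induction_on with
      | zero => simp
      | tmul x y =>
        rw [hψ, Function.comp_apply, Algebra.TensorProduct.comm_tmul, AlgHom.baseChangeLift_tmul]
        exact Subring.mem_center_iff.1 y.1.2 _
      | add s t hs ht => simp [map_add, hs, ht]
    refine ⟨?_, ?_, fun a b => ?_⟩
    · rw [hψΨ]; exact φ.baseChangeLift_injective.comp (AlgEquiv.injective _)
    · rw [hψΨ, (AlgEquiv.surjective _).range_comp, hrange]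
    · simp [hψΨ]
  · simp_rw [← SetLike.mem_coe, ← hrange]
    rw [φ.setOf_commute_range_baseChangeLift]
    ext x
    exact ⟨fun ⟨c, hc⟩ => ⟨c, c.2, hc⟩, fun ⟨z, hz, hzx⟩ => ⟨⟨z, hz⟩, hzx⟩⟩

set_option synthInstance.maxHeartbeats 1000000 in
theorem tensor_center_adjoin_iso
    (n : ℕ) (hn : 1 ≤ n)
    (hHfin : FiniteDimensional (Subring.center H) H)
    (ι : AddMonoidAlgebra H (Fin n →₀ ℕ) →+* K) (hinj : Function.Injective ι)
    (hquot : ∀ z : K, ∃ p q : AddMonoidAlgebra H (Fin n →₀ ℕ), q ≠ 0 ∧ z = ι p * (ι q)⁻¹)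
    (f : K) (hf : f ∈ Subring.center K) :
    ∀ hcent : ∀ a ∈ Subring.center H, constEmb n ι a ∈ Subring.center K,
    letI : Algebra (Subring.center H) (centerAdjoin n ι f hf) :=
      (centerToCenterAdjoin n ι f hf hcent).toAlgebra
    letI : Module (Subring.center H) K :=
      ((constEmb n ι).comp (Subring.center H).subtype).toModule
    (∀ ψ : H ⊗[Subring.center H] (centerAdjoin n ι f hf) →ₗ[Subring.center H] K,
      (∀ (x : H) (y : centerAdjoin n ι f hf), ψ (x ⊗ₜ y) = constEmb n ι x * ((y : Subring.center K) : K)) →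
      Function.Injective ψ ∧
      Set.range ψ = (Subfield.closure (Set.range (constEmb n ι) ∪ {f}) : Set K) ∧
      ∀ a b, ψ (a * b) = ψ a * ψ b) ∧
    {x : K | x ∈ Subfield.closure (Set.range (constEmb n ι) ∪ {f}) ∧
        ∀ y ∈ Subfield.closure (Set.range (constEmb n ι) ∪ {f}), x * y = y * x} =
      (fun z : Subring.center K => (z : K)) '' (centerAdjoin n ι f hf : Set (Subring.center K)) :=
  tensor_center_adjoin_iso_general n hHfin ι f hf

end
end

section
/- In ℍ(X), the element j does not belong to the image φ(ℂ(T, σ)). Consequently, for every division ring L with ℂ ⊆ L ⊆ ℂ(T, σ), the left φ(L)-vector space φ(L) + φ(L)j has dimension 2 over φ(L). -/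
noncomputable section

/-- The quaternion `j`. -/
def qj : Quaternion ℝ := ⟨0, 0, 1, 0⟩

/-- The quaternion `k`. -/
def qk : Quaternion ℝ := ⟨0, 0, 0, 1⟩

/-- The identification of `ℂ` with the subring `ℝ ⊕ ℝi` of Hamilton's quaternions. -/
def qc (a : ℂ) : Quaternion ℝ := ⟨a.re, a.im, 0, 0⟩

/-- The automorphism `σ` of `ℍ`: `a + bi + cj + dk ↦ a - bi + cj - dk`. -/
def qsigma (q : Quaternion ℝ) : Quaternion ℝ := ⟨q.re, -q.imI, q.imJ, -q.imK⟩

variable {M : Type*} [DivisionRing M]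

/- `ℍ(X)`, the quotient division ring of the polynomial ring `ℍ[X]` in a central
variable `X`, is axiomatized as a division ring `M` together with an injective ring
homomorphism `κ : ℍ[X] →+* M` such that every element of `M` is `κ p * (κ q)⁻¹`.
The injective ring homomorphism `φ : ℂ(T, σ) → ℍ(X)` (extending
`Σ aᵢTⁱ ↦ Σ aᵢjⁱXⁱ`, where `σ` is complex conjugation) identifies `ℂ(T, σ)` with
the division subring of `M` generated by `ℂ` and `jX`; under this identification,
`φ(T) = jX` and a division ring `L` with `ℂ ⊆ L ⊆ ℂ(T, σ)` corresponds to its image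
`φ(L)`, a division subring of `M` squeezed between `ℂ` and `φ(ℂ(T, σ)) = ℂ(jX)`. -/

/-- The image of `ℂ` in `M = ℍ(X)`. -/
def complexSet (κ : Polynomial (Quaternion ℝ) →+* M) : Set M :=
  Set.range fun a : ℂ => κ (Polynomial.C (qc a))

/-- The element `j` of `M = ℍ(X)`. -/
def jElem (κ : Polynomial (Quaternion ℝ) →+* M) : M := κ (Polynomial.C qj)

/-- The element `jX = φ(T)` of `M = ℍ(X)`. -/
def jXElem (κ : Polynomial (Quaternion ℝ) →+* M) : M :=
  κ (Polynomial.C qj * Polynomial.X)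

/-- `φ(ℂ(T, σ))`: the smallest division subring of `M = ℍ(X)` containing `ℂ` and
`jX`, i.e. the image of `ℂ(T, σ)` under the embedding `φ`. -/
def phiImage (κ : Polynomial (Quaternion ℝ) →+* M) : Subfield M :=
  Subfield.closure (complexSet κ ∪ {jXElem κ})

/-- `s : M →+* M` is the extension to `M = ℍ(X)` of the order-2 automorphism `σ` of
`ℍ` (`a + bi + cj + dk ↦ a - bi + cj - dk`), acting coefficientwise on `ℍ[X]`. -/
def IsSigmaExtension (κ : Polynomial (Quaternion ℝ) →+* M) (s : M →+* M) : Prop :=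
  ∀ p : Polynomial (Quaternion ℝ),
    s (κ p) = κ (p.sum fun n q => Polynomial.C (qsigma q) * Polynomial.X ^ n)

/-!
Every element of `φ(ℂ(T, σ))` is a fraction `p q⁻¹` of polynomials fixed by the ring automorphism
`τ : Σ aₙXⁿ ↦ Σ (i aₙ i⁻¹)(-X)ⁿ` of `ℍ[X]`, with `q ≠ 0` central. Indeed `ℂ` and `jX` are
`τ`-fixed, and these fractions form a division ring: for `τ`-fixed `p`, the product `p p̄` with the
coefficientwise conjugate is again `τ`-fixed and has real coefficients, so it is central and
`(p q⁻¹)⁻¹ = (q p̄)(p p̄)⁻¹`. But `j = p q⁻¹` would give `jq = p = τ(p) = -jq`, so `q = 0`.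
Uniqueness of `x + y j` follows: otherwise `j = (y - y')⁻¹ (x' - x) ∈ φ(L)`.
-/

open Polynomial MulOpposite

section CentralFractions

variable {K : Type*} [DivisionRing K]

def Subring.HasCentralMultiples (A : Subring K) : Prop :=
  ∀ a ∈ A, a ≠ 0 → ∃ b ∈ A, b ≠ 0 ∧ a * b ∈ Subring.center K

def Subring.centralFractions (A : Subring K) (hA : A.HasCentralMultiples) : Subfield K where
  carrier := {x | ∃ z ∈ A, z ∈ Subring.center K ∧ z ≠ 0 ∧ x * z ∈ A}
  one_mem' := ⟨1, A.one_mem, Subring.one_mem _, one_ne_zero, by rw [one_mul]; exact A.one_mem⟩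
  zero_mem' := ⟨1, A.one_mem, Subring.one_mem _, one_ne_zero, by rw [zero_mul]; exact A.zero_mem⟩
  neg_mem' := by
    rintro x ⟨z, hzA, hzc, hz0, hxz⟩
    exact ⟨z, hzA, hzc, hz0, by simpa using A.neg_mem hxz⟩
  add_mem' := by
    rintro x y ⟨z, hzA, hzc, hz0, hxz⟩ ⟨w, hwA, hwc, hw0, hyw⟩
    refine ⟨z * w, A.mul_mem hzA hwA, Subring.mul_mem _ hzc hwc, mul_ne_zero hz0 hw0, ?_⟩
    have hcomm : y * (z * w) = y * w * z := by
      rw [mul_assoc y w z, Subring.mem_center_iff.mp hzc w]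
    rw [add_mul, ← mul_assoc, hcomm]
    exact A.add_mem (A.mul_mem hxz hwA) (A.mul_mem hyw hzA)
  mul_mem' := by
    rintro x y ⟨z, hzA, hzc, hz0, hxz⟩ ⟨w, hwA, hwc, hw0, hyw⟩
    refine ⟨z * w, A.mul_mem hzA hwA, Subring.mul_mem _ hzc hwc, mul_ne_zero hz0 hw0, ?_⟩
    have hcomm : x * y * (z * w) = x * z * (y * w) := by
      rw [← mul_assoc, mul_assoc x y z, Subring.mem_center_iff.mp hzc y]; simp only [mul_assoc]
    rw [hcomm]
    exact A.mul_mem hxz hyw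
  inv_mem' := by
    rintro x ⟨z, hzA, hzc, hz0, hxz⟩
    rcases eq_or_ne x 0 with rfl | hx0
    · rw [inv_zero]
      exact ⟨1, A.one_mem, Subring.one_mem _, one_ne_zero, by rw [zero_mul]; exact A.zero_mem⟩
    -- `x⁻¹ = (z b) (x z b)⁻¹` for any `b ∈ A` making `x z b` central.
    obtain ⟨b, hbA, hb0, hcen⟩ := hA _ hxz (mul_ne_zero hx0 hz0)
    refine ⟨x * z * b, A.mul_mem hxz hbA, hcen, mul_ne_zero (mul_ne_zero hx0 hz0) hb0, ?_⟩
    rw [mul_assoc, inv_mul_cancel_left₀ hx0]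
    exact A.mul_mem hzA hbA

theorem Subring.mem_centralFractions_of_mem {A : Subring K} (hA : A.HasCentralMultiples) {x : K}
    (hx : x ∈ A) : x ∈ A.centralFractions hA :=
  ⟨1, A.one_mem, Subring.one_mem _, one_ne_zero, by simpa using hx⟩

end CentralFractions

theorem Polynomial.mem_center_of_forall_coeff_mem_center {R : Type*} [Ring R] {p : R[X]}
    (h : ∀ n, p.coeff n ∈ Subring.center R) : p ∈ Subring.center R[X] := by
  refine Subring.mem_center_iff.mpr fun q => Polynomial.ext fun n => ?_
  rw [coeff_mul, coeff_mul, ← Finset.Nat.sum_antidiagonal_swap]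
  exact Finset.sum_congr rfl fun k _ => Subring.mem_center_iff.mp (h k.1) _

theorem RingHom.map_mem_center_of_forall_eq_mul_inv {R K : Type*} [Ring R] [DivisionRing K]
    (κ : R →+* K) (hquot : ∀ z : K, ∃ p q : R, z = κ p * (κ q)⁻¹) {r : R}
    (hr : r ∈ Subring.center R) : κ r ∈ Subring.center K := by
  have hcomm (p : R) : Commute (κ p) (κ r) := by
    simp only [Commute, SemiconjBy, ← map_mul, Subring.mem_center_iff.mp hr p]
  refine Subring.mem_center_iff.mpr fun z => ?_
  obtain ⟨p, q, rfl⟩ := hquot z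
  exact ((hcomm p).mul_left (hcomm q).inv_left₀).eq

section StarPoly

variable {R : Type*} [Semiring R] [StarRing R]

def Polynomial.starRingHom : R[X] →+* R[X]ᵐᵒᵖ :=
  (opRingEquiv R).symm.toRingHom.comp (mapRingHom (starRingEquiv (R := R)).toRingHom)

@[simp]
theorem Polynomial.coeff_unop_starRingHom (p : R[X]) (n : ℕ) :
    (unop (starRingHom p)).coeff n = star (p.coeff n) := by
  simpa [starRingHom] using (congrArg unop (coeff_opRingEquiv (starRingHom p) n)).symm

theorem Polynomial.unop_starRingHom_unop_starRingHom (p : R[X]) :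
    unop (starRingHom (unop (starRingHom p))) = p := by
  ext n; simp

theorem Polynomial.isSelfAdjoint_coeff_mul_unop_starRingHom (p : R[X]) (n : ℕ) :
    IsSelfAdjoint ((p * unop (starRingHom p)).coeff n) := by
  rw [IsSelfAdjoint, ← coeff_unop_starRingHom, map_mul, unop_mul,
    unop_starRingHom_unop_starRingHom]

end StarPoly

theorem Polynomial.coeff_eval₂RingHom'_C_comp_neg_X {R S : Type*} [Ring R] [Ring S] (f : R →+* S)
    (hf : ∀ a, Commute (C (f a)) (-X)) (p : R[X]) (n : ℕ) :
    (eval₂RingHom' (C.comp f) (-X) hf p).coeff n = (-1) ^ n * f (p.coeff n) := by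
  induction p using Polynomial.induction_on' with
  | add p q hp hq => simp only [map_add, coeff_add, hp, hq, mul_add]
  | monomial k a =>
    have hneg : (-X : S[X]) ^ k = C ((-1) ^ k) * X ^ k := by
      rw [neg_pow, map_pow, map_neg, map_one]
    simp only [eval₂RingHom', RingHom.coe_mk, MonoidHom.coe_mk, OneHom.coe_mk, eval₂_monomial,
      RingHom.comp_apply, hneg, ← mul_assoc, ← C_mul, coeff_C_mul_X_pow, coeff_monomial]
    split_ifs with hkn hnk hnk
    · subst hkn; exact ((Commute.neg_one_left _).pow_left n).eq.symm
    · exact absurd hkn.symm hnk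
    · exact absurd hnk.symm hkn
    · simp

theorem Subfield.eq_and_eq_of_add_mul_eq_add_mul {K : Type*} [DivisionRing K] (L : Subfield K)
    {e : K} (he : e ∉ L) {x y x' y' : K} (hx : x ∈ L) (hy : y ∈ L) (hx' : x' ∈ L) (hy' : y' ∈ L)
    (h : x + y * e = x' + y' * e) : x = x' ∧ y = y' := by
  obtain rfl : y = y' := by
    by_contra hne
    have hy0 : y - y' ≠ 0 := sub_ne_zero.mpr hne
    have he' : e = (y - y')⁻¹ * (x' - x) := by
      rw [eq_inv_mul_iff_mul_eq₀ hy0, sub_mul, sub_eq_sub_iff_add_eq_add, add_comm, h]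
    exact he (he' ▸ L.mul_mem (L.inv_mem (L.sub_mem hy hy')) (L.sub_mem hx' hx))
  exact ⟨add_right_cancel h, rfl⟩

def quatI : unitary (Quaternion ℝ) :=
  ⟨(Complex.I : ℂ), Unitary.mem_iff.mpr <| by
    constructor <;> ext <;>
      simp [Quaternion.re_mul, Quaternion.imI_mul, Quaternion.imJ_mul, Quaternion.imK_mul,
        Quaternion.re_one, Quaternion.imI_one, Quaternion.imJ_one, Quaternion.imK_one]⟩

def conjI : Quaternion ℝ ≃⋆ₐ[ℝ] Quaternion ℝ := Unitary.conjStarAlgAut ℝ _ quatI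

theorem conjI_qc (a : ℂ) : conjI (qc a) = qc a := by
  change (quatI : Quaternion ℝ) * a * star (quatI : Quaternion ℝ) = a
  rw [show (quatI : Quaternion ℝ) = Complex.I from rfl, ← Quaternion.coeComplex_mul, mul_comm,
    Quaternion.coeComplex_mul, mul_assoc, ← show (quatI : Quaternion ℝ) = Complex.I from rfl,
    Unitary.mul_star_self_of_mem quatI.2, mul_one]

theorem conjI_qj : conjI qj = -qj := by
  change (Complex.I : Quaternion ℝ) * qj * star (Complex.I : Quaternion ℝ) = -qj
  ext <;> simp only [Quaternion.re_mul, Quaternion.imI_mul, Quaternion.imJ_mul, Quaternion.imK_mul,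
    Quaternion.re_neg, Quaternion.imI_neg, Quaternion.imJ_neg, Quaternion.imK_neg] <;> simp [qj]

def conjINegX : (Quaternion ℝ)[X] →+* (Quaternion ℝ)[X] :=
  eval₂RingHom' (C.comp (conjI : Quaternion ℝ →+* Quaternion ℝ)) (-X)
    fun _ => (commute_X _).symm.neg_right

theorem conjINegX_C (a : Quaternion ℝ) : conjINegX (C a) = C (conjI a) :=
  eval₂_C _ _

theorem conjINegX_X : conjINegX X = -X :=
  eval₂_X _ _

theorem coeff_conjINegX (p : (Quaternion ℝ)[X]) (n : ℕ) :
    (conjINegX p).coeff n = (-1) ^ n * conjI (p.coeff n) :=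
  coeff_eval₂RingHom'_C_comp_neg_X _ _ p n

-- The `conjINegX`-fixed polynomials are those whose `n`-th coefficient lies in `ℂ jⁿ`: the image
-- of `ℂ[T, σ]`.
def skewImage : Subring (Quaternion ℝ)[X] := conjINegX.eqLocus (RingHom.id _)

theorem mem_skewImage {p : (Quaternion ℝ)[X]} : p ∈ skewImage ↔ conjINegX p = p := Iff.rfl

theorem C_qc_mem_skewImage (a : ℂ) : C (qc a) ∈ skewImage := by
  rw [mem_skewImage, conjINegX_C, conjI_qc]

theorem C_qj_mul_X_mem_skewImage : C qj * X ∈ skewImage := by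
  rw [mem_skewImage, map_mul, conjINegX_C, conjINegX_X, conjI_qj, C_neg, neg_mul_neg]

theorem unop_starRingHom_mem_skewImage {p : (Quaternion ℝ)[X]} (hp : p ∈ skewImage) :
    unop (starRingHom p) ∈ skewImage := by
  rw [mem_skewImage] at hp ⊢
  refine Polynomial.ext fun n => ?_
  have hpn : (-1) ^ n * conjI (p.coeff n) = p.coeff n := by rw [← coeff_conjINegX, hp]
  rw [coeff_conjINegX, coeff_unop_starRingHom]
  conv_rhs => rw [← hpn]
  rw [star_mul, ← map_star, star_pow, star_neg, star_one, ((Commute.neg_one_left _).pow_left n).eq]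

theorem mul_unop_starRingHom_mem_center (p : (Quaternion ℝ)[X]) :
    p * unop (starRingHom p) ∈ Subring.center (Quaternion ℝ)[X] := by
  refine mem_center_of_forall_coeff_mem_center fun n => ?_
  rw [Quaternion.star_eq_self.mp (isSelfAdjoint_coeff_mul_unop_starRingHom p n)]
  exact Subring.mem_center_iff.mpr fun q => (Quaternion.coe_commutes _ q).symm

theorem eq_zero_of_C_qj_mul_mem_skewImage {q : (Quaternion ℝ)[X]} (hq : q ∈ skewImage)
    (hjq : C qj * q ∈ skewImage) : q = 0 := by
  rw [mem_skewImage, map_mul, conjINegX_C, conjI_qj, mem_skewImage.mp hq, C_neg, neg_mul,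
    neg_eq_iff_add_eq_zero, ← add_mul, ← C_add] at hjq
  refine (mul_eq_zero.mp hjq).resolve_left fun h => ?_
  have h2 : (qj + qj).imJ = (0 : Quaternion ℝ).imJ := by rw [C_eq_zero.mp h]
  rw [Quaternion.imJ_add, Quaternion.imJ_zero] at h2
  norm_num [qj] at h2

theorem hasCentralMultiples_map_skewImage (κ : (Quaternion ℝ)[X] →+* M)
    (hinj : Function.Injective κ)
    (hquot : ∀ z : M, ∃ p q : (Quaternion ℝ)[X], q ≠ 0 ∧ z = κ p * (κ q)⁻¹) :
    (skewImage.map κ).HasCentralMultiples := by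
  rintro _ ⟨p, hp, rfl⟩ hp0
  refine ⟨κ (unop (starRingHom p)), ⟨_, unop_starRingHom_mem_skewImage hp, rfl⟩, ?_, ?_⟩
  · rw [Ne, map_eq_zero_iff κ hinj]
    intro hstar
    apply hp0
    rw [← unop_starRingHom_unop_starRingHom p, hstar, map_zero, unop_zero, map_zero]
  · rw [← map_mul]
    exact κ.map_mem_center_of_forall_eq_mul_inv
      (fun z => (hquot z).imp fun _ ⟨q, _, hz⟩ => ⟨q, hz⟩) (mul_unop_starRingHom_mem_center p)

theorem phiImage_le_centralFractions (κ : (Quaternion ℝ)[X] →+* M)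
    (hA : (skewImage.map κ).HasCentralMultiples) :
    phiImage κ ≤ (skewImage.map κ).centralFractions hA := by
  refine Subfield.closure_le.mpr ?_
  rintro _ (⟨a, rfl⟩ | rfl)
  · exact Subring.mem_centralFractions_of_mem hA ⟨_, C_qc_mem_skewImage a, rfl⟩
  · exact Subring.mem_centralFractions_of_mem hA ⟨_, C_qj_mul_X_mem_skewImage, rfl⟩

theorem jElem_notMem_centralFractions (κ : (Quaternion ℝ)[X] →+* M)
    (hinj : Function.Injective κ) (hA : (skewImage.map κ).HasCentralMultiples) :
    jElem κ ∉ (skewImage.map κ).centralFractions hA := by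
  rintro ⟨_, ⟨q, hq, rfl⟩, -, hq0, p, hp, hpq⟩
  have hjq : C qj * q = p := hinj (by rw [map_mul, hpq]; rfl)
  rw [eq_zero_of_C_qj_mul_mem_skewImage hq (hjq ▸ hp), map_zero] at hq0
  exact hq0 rfl

theorem j_not_in_phi_image_and_dim_two
    (κ : Polynomial (Quaternion ℝ) →+* M) (hinj : Function.Injective κ)
    (hquot : ∀ z : M, ∃ p q : Polynomial (Quaternion ℝ), q ≠ 0 ∧ z = κ p * (κ q)⁻¹) :
    jElem κ ∉ phiImage κ ∧
    ∀ L : Subfield M, complexSet κ ⊆ (L : Set M) → (L : Set M) ⊆ phiImage κ →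
      ∀ x ∈ L, ∀ y ∈ L, ∀ x' ∈ L, ∀ y' ∈ L,
        x + y * jElem κ = x' + y' * jElem κ → x = x' ∧ y = y' := by
  have hA := hasCentralMultiples_map_skewImage κ hinj hquot
  have hj : jElem κ ∉ phiImage κ := fun h =>
    jElem_notMem_centralFractions κ hinj hA (phiImage_le_centralFractions κ hA h)
  exact ⟨hj, fun L _ hL x hx y hy x' hx' y' hy' h =>
    L.eq_and_eq_of_add_mul_eq_add_mul (fun hjL => hj (hL hjL)) hx hy hx' hy' h⟩

end
end

section
/- Let L be a division ring with ℂ ⊆ L ⊆ ℂ(T, σ) such that φ(L) is σ-invariant, i.e., σ(φ(L)) = φ(L). Then φ(L) + φ(L)j is a division subring of ℍ(X). -/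
noncomputable section

variable {M : Type*} [DivisionRing M]

/-!
Conjugation by `j` on `ℍ` is `σ`, so `j z = σ(z) j` for every `z ∈ ℍ[X]` and hence, since such
identities pass to products and inverses, for every `z ∈ ℍ(X)`. Together with `j² = -1` this gives
`(x + y j)(u + v j) = (x u - y σ(v)) + (x v + y σ(u)) j`, so `L + L j` is a ring once `σ(L) ⊆ L`.
For inverses write `x + y j = y (c + j)` with `c ∈ L`; choosing `d ∈ L` with `σ(d) = -c` gives
`(c + j)(d + j) = c d - 1 ∈ L`.
-/

section SkewSum

variable {D : Type*} [DivisionRing D] {s : D →+* D} {j : D}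

def skewSum (L : Subfield D) (j : D) : Set D := {z | ∃ x ∈ L, ∃ y ∈ L, z = x + y * j}

variable {L : Subfield D}

theorem add_mul_mul_add_mul_of_semiconjBy (hjj : j * j = -1) (hj : ∀ z, SemiconjBy j z (s z))
    (x y u v : D) :
    (x + y * j) * (u + v * j) = (x * u - y * s v) + (x * v + y * s u) * j := by
  calc (x + y * j) * (u + v * j) = x * u + x * v * j + y * (j * u) + y * (j * v) * j := by
        noncomm_ring
    _ = x * u + x * v * j + y * s u * j + y * s v * (j * j) := by
        rw [(hj u).eq, (hj v).eq]; noncomm_ring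
    _ = (x * u - y * s v) + (x * v + y * s u) * j := by rw [hjj]; noncomm_ring

theorem mem_skewSum_of_mem {x : D} (hx : x ∈ L) : x ∈ skewSum L j :=
  ⟨x, hx, 0, L.zero_mem, by simp⟩

theorem mul_mem_skewSum (hjj : j * j = -1) (hj : ∀ z, SemiconjBy j z (s z))
    (hmaps : Set.MapsTo s L L) {a b : D} (ha : a ∈ skewSum L j) (hb : b ∈ skewSum L j) :
    a * b ∈ skewSum L j := by
  obtain ⟨x, hx, y, hy, rfl⟩ := ha
  obtain ⟨u, hu, v, hv, rfl⟩ := hb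
  exact ⟨x * u - y * s v, L.sub_mem (L.mul_mem hx hu) (L.mul_mem hy (hmaps hv)),
    x * v + y * s u, L.add_mem (L.mul_mem hx hv) (L.mul_mem hy (hmaps hu)),
    add_mul_mul_add_mul_of_semiconjBy hjj hj x y u v⟩

theorem inv_add_mem_skewSum (hjj : j * j = -1) (hj : ∀ z, SemiconjBy j z (s z))
    (hmaps : Set.MapsTo s L L) (hsurj : Set.SurjOn s L L) {c : D} (hc : c ∈ L) :
    (c + j)⁻¹ ∈ skewSum L j := by
  obtain ⟨d, hd, hdc⟩ : ∃ d ∈ L, s d = -c := hsurj (L.neg_mem hc)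
  have hprod : (c + j) * (d + j) = c * d - 1 := by
    simpa [hdc] using add_mul_mul_add_mul_of_semiconjBy hjj hj c 1 d 1
  by_cases hcd : c * d - 1 = 0
  · rcases mul_eq_zero.mp (hprod.trans hcd) with hcj | hdj
    · simpa [hcj] using mem_skewSum_of_mem L.zero_mem
    · have hjL : j ∈ L := by simpa [neg_eq_of_add_eq_zero_right hdj] using L.neg_mem hd
      exact mem_skewSum_of_mem (L.inv_mem (L.add_mem hc hjL))
  · have hinv : (c + j)⁻¹ = (d + j) * (c * d - 1)⁻¹ :=
      inv_eq_of_mul_eq_one_right (by rw [← mul_assoc, hprod, mul_inv_cancel₀ hcd])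
    rw [hinv]
    exact mul_mem_skewSum hjj hj hmaps ⟨d, hd, 1, L.one_mem, by simp⟩
      (mem_skewSum_of_mem (L.inv_mem (L.sub_mem (L.mul_mem hc hd) L.one_mem)))

theorem inv_mem_skewSum (hjj : j * j = -1) (hj : ∀ z, SemiconjBy j z (s z))
    (hmaps : Set.MapsTo s L L) (hsurj : Set.SurjOn s L L) {a : D} (ha : a ∈ skewSum L j) :
    a⁻¹ ∈ skewSum L j := by
  obtain ⟨x, hx, y, hy, rfl⟩ := ha
  by_cases hy0 : y = 0
  · simpa [hy0] using mem_skewSum_of_mem (L.inv_mem hx)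
  have hfac : x + y * j = y * (y⁻¹ * x + j) := by
    rw [mul_add, ← mul_assoc, mul_inv_cancel₀ hy0, one_mul]
  rw [hfac, mul_inv_rev]
  exact mul_mem_skewSum hjj hj hmaps
    (inv_add_mem_skewSum hjj hj hmaps hsurj (L.mul_mem (L.inv_mem hy) hx))
    (mem_skewSum_of_mem (L.inv_mem hy))

theorem Subfield.exists_coe_eq_skewSum (L : Subfield D) (hjj : j * j = -1)
    (hj : ∀ z, SemiconjBy j z (s z)) (hsL : s '' L = L) :
    ∃ E : Subfield D, (E : Set D) = skewSum L j :=
  have hmaps : Set.MapsTo s L L := Set.mapsTo_iff_image_subset.2 hsL.subset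
  ⟨{ carrier := skewSum L j
     zero_mem' := mem_skewSum_of_mem L.zero_mem
     one_mem' := mem_skewSum_of_mem L.one_mem
     add_mem' := by
       rintro _ _ ⟨x, hx, y, hy, rfl⟩ ⟨u, hu, v, hv, rfl⟩
       exact ⟨x + u, L.add_mem hx hu, y + v, L.add_mem hy hv, by rw [add_mul]; abel⟩
     neg_mem' := by
       rintro _ ⟨x, hx, y, hy, rfl⟩
       exact ⟨-x, L.neg_mem hx, -y, L.neg_mem hy, by rw [neg_mul, neg_add]⟩
     mul_mem' := mul_mem_skewSum hjj hj hmaps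
     inv_mem' := fun _ => inv_mem_skewSum hjj hj hmaps hsL.superset }, rfl⟩

end SkewSum

theorem qj_mul_qj : qj * qj = -1 := by
  ext <;> simp [Quaternion.re_mul, Quaternion.imI_mul, Quaternion.imJ_mul, Quaternion.imK_mul] <;>
    simp [qj, Quaternion.re_one, Quaternion.imI_one, Quaternion.imJ_one, Quaternion.imK_one]

theorem qsigma_mul_qj (a : Quaternion ℝ) : qsigma a * qj = qj * a := by
  ext <;> simp [Quaternion.re_mul, Quaternion.imI_mul, Quaternion.imJ_mul, Quaternion.imK_mul] <;>
    simp [qj, qsigma]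

open Polynomial in
theorem semiconjBy_C_qj (p : (Quaternion ℝ)[X]) :
    SemiconjBy (C qj) p (p.sum fun n q => C (qsigma q) * X ^ n) := by
  unfold SemiconjBy
  conv_lhs => rw [p.as_sum_support_C_mul_X_pow]
  rw [sum_def, Finset.mul_sum, Finset.sum_mul]
  refine Finset.sum_congr rfl fun n _ => ?_
  calc C qj * (C (p.coeff n) * X ^ n) = C (qsigma (p.coeff n)) * C qj * X ^ n := by
        rw [← C_mul, qsigma_mul_qj, C_mul, mul_assoc]
    _ = C (qsigma (p.coeff n)) * X ^ n * C qj := by rw [mul_assoc, mul_assoc, X_pow_mul]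

theorem jElem_mul_self (κ : Polynomial (Quaternion ℝ) →+* M) : jElem κ * jElem κ = -1 := by
  rw [jElem, ← map_mul, ← Polynomial.C_mul, qj_mul_qj, Polynomial.C_neg, Polynomial.C_1, map_neg,
    map_one]

theorem semiconjBy_jElem_of_isSigmaExtension {κ : Polynomial (Quaternion ℝ) →+* M}
    (hquot : ∀ z : M, ∃ p q : Polynomial (Quaternion ℝ), q ≠ 0 ∧ z = κ p * (κ q)⁻¹)
    {s : M →+* M} (hs : IsSigmaExtension κ s) (z : M) : SemiconjBy (jElem κ) z (s z) := by
  have hpoly (p : Polynomial (Quaternion ℝ)) : SemiconjBy (jElem κ) (κ p) (s (κ p)) := by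
    rw [hs p]
    exact (semiconjBy_C_qj p).map κ
  obtain ⟨p, q, -, rfl⟩ := hquot z
  rw [map_mul, map_inv₀]
  exact (hpoly p).mul_right (hpoly q).inv_right₀

theorem phiL_plus_phiL_j_is_division_subring_general
    (κ : Polynomial (Quaternion ℝ) →+* M)
    (hquot : ∀ z : M, ∃ p q : Polynomial (Quaternion ℝ), q ≠ 0 ∧ z = κ p * (κ q)⁻¹)
    (L : Subfield M)
    (s : M →+* M) (hs : IsSigmaExtension κ s)
    (hsL : s '' (L : Set M) = (L : Set M)) :
    ∃ E : Subfield M,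
      (E : Set M) = {z : M | ∃ x ∈ L, ∃ y ∈ L, z = x + y * jElem κ} :=
  L.exists_coe_eq_skewSum (jElem_mul_self κ) (semiconjBy_jElem_of_isSigmaExtension hquot hs) hsL

theorem phiL_plus_phiL_j_is_division_subring
    (κ : Polynomial (Quaternion ℝ) →+* M) (hinj : Function.Injective κ)
    (hquot : ∀ z : M, ∃ p q : Polynomial (Quaternion ℝ), q ≠ 0 ∧ z = κ p * (κ q)⁻¹)
    (L : Subfield M)
    (hCL : complexSet κ ⊆ (L : Set M)) (hLD : (L : Set M) ⊆ phiImage κ)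
    (s : M →+* M) (hs : IsSigmaExtension κ s)
    (hsL : s '' (L : Set M) = (L : Set M)) :
    ∃ E : Subfield M,
      (E : Set M) = {z : M | ∃ x ∈ L, ∃ y ∈ L, z = x + y * jElem κ} :=
  phiL_plus_phiL_j_is_division_subring_general κ hquot L s hs hsL

end
end

section
/- For i ∈ {1, 2}, let Lᵢ be a division ring with ℂ ⊆ Lᵢ ⊆ ℂ(T, σ). If φ(L₁) ⊆ φ(L₂) and φ(L₂) + φ(L₂)j ⊆ φ(L₁) + φ(L₁)j, then L₁ = L₂. -/
noncomputable section

variable {M : Type*} [DivisionRing M]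

/-
Conjugation by `i` on the coefficients together with `X ↦ -X` is an automorphism of `ℍ[X]`,
and it extends to `ℍ(X)` because `ℍ(X)` is the ring of right fractions of `ℍ[X]`. The
extension fixes `ℂ` and `jX`, hence all of `φ(ℂ(T, σ))`, but sends `j` to `-j`; so
`j ∉ φ(ℂ(T, σ))`. Now every `x ∈ φ(L₂)` is `a + bj` with `a, b ∈ φ(L₁) ⊆ φ(L₂)`, and
`b ≠ 0` would give `j = b⁻¹(x - a) ∈ φ(L₂)`; hence `x = a ∈ φ(L₁)`.
-/

open scoped nonZeroDivisors
open OreLocalization Polynomial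

namespace OreLocalization

variable {R D : Type*} [Ring R] [Nontrivial R] [OreSet R⁰] [DivisionRing D]

def liftOfInjective (g : R →+* D) (hg : Function.Injective g) : R[R⁰⁻¹] →+* D :=
  universalHom g
    (Units.liftRight (g.toMonoidHom.comp R⁰.subtype)
      (fun s => Units.mk0 (g s) ((map_ne_zero_iff g hg).2 (nonZeroDivisors.coe_ne_zero s)))
      fun _ => rfl)
    fun _ => rfl

theorem liftOfInjective_oreDiv (g : R →+* D) (hg : Function.Injective g) (r : R) (s : R⁰) :
    liftOfInjective g hg (r /ₒ s) = (g s)⁻¹ * g r := rfl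

theorem liftOfInjective_numeratorHom (g : R →+* D) (hg : Function.Injective g) (r : R) :
    liftOfInjective g hg (numeratorHom r) = g r := universalHom_commutes ..

theorem exists_ringHom_comp_eq_of_forall_eq_inv_mul [NoZeroDivisors R] {N : Type*}
    [DivisionRing N] (κ : R →+* D) (hκ : Function.Injective κ)
    (hfrac : ∀ z : D, ∃ (r : R) (s : R⁰), z = (κ s)⁻¹ * κ r)
    (f : R →+* N) (hf : Function.Injective f) : ∃ G : D →+* N, ∀ r, G (κ r) = f r := by
  have he : Function.Bijective (liftOfInjective κ hκ) := by
    refine ⟨RingHom.injective _, fun z => ?_⟩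
    obtain ⟨r, s, rfl⟩ := hfrac z
    exact ⟨r /ₒ s, liftOfInjective_oreDiv ..⟩
  refine ⟨(liftOfInjective f hf).comp (RingEquiv.ofBijective _ he).symm.toRingHom, fun r => ?_⟩
  have : (RingEquiv.ofBijective _ he).symm (κ r) = numeratorHom r := by
    rw [RingEquiv.symm_apply_eq, RingEquiv.ofBijective_apply, liftOfInjective_numeratorHom]
  rw [RingHom.comp_apply, RingEquiv.toRingHom_eq_coe, RingEquiv.coe_toRingHom, this,
    liftOfInjective_numeratorHom]

end OreLocalization

/- Mathlib's Ore localization is built from left fractions `s⁻¹ * r`, so right fractions are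
handled in the opposite rings. -/
theorem RingHom.exists_comp_eq_of_forall_eq_mul_inv {R M N : Type*} [Ring R] [DivisionRing M]
    [DivisionRing N] (κ : R →+* M) (hκ : Function.Injective κ)
    (hquot : ∀ z : M, ∃ p q : R, q ≠ 0 ∧ z = κ p * (κ q)⁻¹)
    (f : R →+* N) (hf : Function.Injective f) : ∃ G : M →+* N, ∀ p, G (κ p) = f p := by
  have : Nontrivial R := κ.domain_nontrivial
  have : NoZeroDivisors R := hκ.noZeroDivisors κ (map_zero κ) (map_mul κ)
  have hfrac : ∀ z : Mᵐᵒᵖ, ∃ (p : Rᵐᵒᵖ) (q : (Rᵐᵒᵖ)⁰),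
      z = (RingHom.op κ q)⁻¹ * RingHom.op κ p := by
    intro z
    obtain ⟨p, q, hq, hz⟩ := hquot z.unop
    refine ⟨.op p, ⟨.op q, mem_nonZeroDivisors_of_ne_zero (by simpa)⟩, ?_⟩
    apply MulOpposite.unop_injective
    simp [hz]
  have : OreSet (Rᵐᵒᵖ)⁰ := by
    refine (nonempty_oreSet_iff_of_noZeroDivisors.2 fun r s => ?_).some
    obtain ⟨a, b, hb, h⟩ := hquot ((κ s.1.unop)⁻¹ * κ r.unop)
    have hs : κ s.1.unop ≠ 0 := (map_ne_zero_iff κ hκ).2 <|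
      (MulOpposite.unop_ne_zero_iff _).2 (nonZeroDivisors.coe_ne_zero s)
    refine ⟨.op a, ⟨.op b, mem_nonZeroDivisors_of_ne_zero (by simpa)⟩, ?_⟩
    apply MulOpposite.unop_injective
    apply hκ
    simp only [MulOpposite.unop_mul, MulOpposite.unop_op, map_mul]
    rw [inv_mul_eq_iff_eq_mul₀ hs] at h
    rw [h]
    simp [mul_assoc, (map_ne_zero_iff κ hκ).2 hb]
  obtain ⟨G, hG⟩ := exists_ringHom_comp_eq_of_forall_eq_inv_mul (RingHom.op κ)
    (MulOpposite.op_injective.comp (hκ.comp MulOpposite.unop_injective)) hfrac (RingHom.op f)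
    (MulOpposite.op_injective.comp (hf.comp MulOpposite.unop_injective))
  exact ⟨RingHom.unop G, fun p => congrArg MulOpposite.unop (hG (.op p))⟩

def qi : Quaternion ℝ := ⟨0, 1, 0, 0⟩

theorem qi_mul_qi : qi * qi = -1 := by
  apply Quaternion.ext <;>
    simp [Quaternion.re_mul, Quaternion.imI_mul, Quaternion.imJ_mul, Quaternion.imK_mul] <;>
    simp [qi, Quaternion.re_one, Quaternion.imI_one, Quaternion.imJ_one, Quaternion.imK_one]

theorem qi_mul_qj : qi * qj = -(qj * qi) := by
  apply Quaternion.ext <;>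
    simp [Quaternion.re_mul, Quaternion.imI_mul, Quaternion.imJ_mul, Quaternion.imK_mul] <;>
    simp [qi, qj]

theorem qi_mul_qc (a : ℂ) : qi * qc a = qc a * qi := by
  apply Quaternion.ext <;>
    simp [Quaternion.re_mul, Quaternion.imI_mul, Quaternion.imJ_mul, Quaternion.imK_mul] <;>
    simp [qi, qc]

def qiUnit : (Quaternion ℝ)ˣ :=
  ⟨qi, -qi, by rw [mul_neg, qi_mul_qi, neg_neg], by rw [neg_mul, qi_mul_qi, neg_neg]⟩

def conjByI : Quaternion ℝ →+* Quaternion ℝ :=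
  MulSemiringAction.toRingHom _ _ (ConjAct.toConjAct qiUnit)

theorem conjByI_apply (q : Quaternion ℝ) : conjByI q = -(qi * q * qi) := by
  simp [conjByI, ConjAct.units_smul_def, qiUnit]

theorem conjByI_qj : conjByI qj = -qj := by
  rw [conjByI_apply, qi_mul_qj, neg_mul, mul_assoc, qi_mul_qi, mul_neg_one, neg_neg]

theorem conjByI_qc (a : ℂ) : conjByI (qc a) = qc a := by
  rw [conjByI_apply, qi_mul_qc, mul_assoc, qi_mul_qi, mul_neg_one, neg_neg]

theorem conjByI_conjByI (q : Quaternion ℝ) : conjByI (conjByI q) = q := by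
  rw [conjByI_apply, conjByI_apply, mul_neg, neg_mul, neg_neg, ← mul_assoc, ← mul_assoc,
    qi_mul_qi, mul_assoc, qi_mul_qi, neg_one_mul, mul_neg_one, neg_neg]

def conjByINegX : Polynomial (Quaternion ℝ) →+* Polynomial (Quaternion ℝ) :=
  eval₂RingHom' (C.comp conjByI) (-X) fun a => ((commute_X (C (conjByI a))).symm).neg_right

theorem conjByINegX_C (a : Quaternion ℝ) : conjByINegX (C a) = C (conjByI a) := eval₂_C _ _

theorem conjByINegX_X : conjByINegX X = -X := eval₂_X _ _

theorem conjByINegX_involutive : Function.Involutive conjByINegX := by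
  intro p
  induction p using Polynomial.induction_on' with
  | add p q hp hq => rw [map_add, map_add, hp, hq]
  | monomial n a =>
    simp only [← C_mul_X_pow_eq_monomial, map_mul, map_pow, map_neg, conjByINegX_C,
      conjByINegX_X, conjByI_conjByI, neg_neg]

section

variable (κ : Polynomial (Quaternion ℝ) →+* M)

theorem phiImage_le_eqLocusField {G : M →+* M} (hG : ∀ p, G (κ p) = κ (conjByINegX p)) :
    phiImage κ ≤ G.eqLocusField (RingHom.id M) := by
  refine Subfield.closure_le.2 ?_
  rintro _ (⟨a, rfl⟩ | rfl)
  · change G _ = _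
    rw [hG, conjByINegX_C, conjByI_qc]
    rfl
  · change G (jXElem κ) = jXElem κ
    rw [jXElem, hG, map_mul, conjByINegX_C, conjByINegX_X, conjByI_qj, C_neg, neg_mul_neg]

theorem jElem_notMem_phiImage (hinj : Function.Injective κ)
    (hquot : ∀ z : M, ∃ p q : Polynomial (Quaternion ℝ), q ≠ 0 ∧ z = κ p * (κ q)⁻¹) :
    jElem κ ∉ phiImage κ := by
  obtain ⟨G, hG⟩ := κ.exists_comp_eq_of_forall_eq_mul_inv hinj hquot (κ.comp conjByINegX)
    (hinj.comp conjByINegX_involutive.injective)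
  intro hj
  have hfix : G (jElem κ) = jElem κ := phiImage_le_eqLocusField κ hG hj
  rw [jElem, hG, RingHom.comp_apply, conjByINegX_C, conjByI_qj] at hfix
  have := congrArg QuaternionAlgebra.imJ (C_injective (hinj hfix))
  rw [Quaternion.imJ_neg] at this
  norm_num [qj] at this

end

theorem eq_of_sum_j_subset_general
    (κ : Polynomial (Quaternion ℝ) →+* M) (hinj : Function.Injective κ)
    (hquot : ∀ z : M, ∃ p q : Polynomial (Quaternion ℝ), q ≠ 0 ∧ z = κ p * (κ q)⁻¹)
    (L₁ L₂ : Subfield M)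
    (hD2 : (L₂ : Set M) ⊆ phiImage κ)
    (h12 : (L₁ : Set M) ⊆ (L₂ : Set M))
    (hsum : {z : M | ∃ x ∈ L₂, ∃ y ∈ L₂, z = x + y * jElem κ} ⊆
            {z : M | ∃ x ∈ L₁, ∃ y ∈ L₁, z = x + y * jElem κ}) :
    L₁ = L₂ := by
  refine le_antisymm h12 fun x hx => ?_
  obtain ⟨a, ha, b, hb, hxab⟩ := hsum ⟨x, hx, 0, L₂.zero_mem, by rw [zero_mul, add_zero]⟩
  obtain rfl | hb0 := eq_or_ne b 0
  · rwa [hxab, zero_mul, add_zero]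
  · have hj : jElem κ = b⁻¹ * (x - a) := by
      rw [hxab, add_sub_cancel_left, inv_mul_cancel_left₀ hb0]
    refine absurd (hD2 ?_) (jElem_notMem_phiImage κ hinj hquot)
    rw [hj]
    exact L₂.mul_mem (L₂.inv_mem (h12 hb)) (L₂.sub_mem hx (h12 ha))

theorem eq_of_sum_j_subset
    (κ : Polynomial (Quaternion ℝ) →+* M) (hinj : Function.Injective κ)
    (hquot : ∀ z : M, ∃ p q : Polynomial (Quaternion ℝ), q ≠ 0 ∧ z = κ p * (κ q)⁻¹)
    (L₁ L₂ : Subfield M)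
    (hC1 : complexSet κ ⊆ (L₁ : Set M)) (hD1 : (L₁ : Set M) ⊆ phiImage κ)
    (hC2 : complexSet κ ⊆ (L₂ : Set M)) (hD2 : (L₂ : Set M) ⊆ phiImage κ)
    (h12 : (L₁ : Set M) ⊆ (L₂ : Set M))
    (hsum : {z : M | ∃ x ∈ L₂, ∃ y ∈ L₂, z = x + y * jElem κ} ⊆
            {z : M | ∃ x ∈ L₁, ∃ y ∈ L₁, z = x + y * jElem κ}) :
    L₁ = L₂ :=
  eq_of_sum_j_subset_general κ hinj hquot L₁ L₂ hD2 h12 hsum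
end
end
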